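/- arXiv:math/0406465 — 3 statements merged into one kernel-verified Lean document; each statement's English description precedes it below -/
import Mathlib

section
/- Rosenthal's inequality: for independent centered real random variables U₁,…,Uₙ and any p ≥ 2, there is a constant C(p) depending only on p such that E|∑ᵢ Uᵢ|^p ≤ C(p) (∑ᵢ E|Uᵢ|^p + (∑ᵢ E Uᵢ²)^{p/2}). -/
/-!
For `p ≥ 2` the derivative `p |u| ^ (p - 2) u` of `|u| ^ p` is Lipschitz with constant
`p (p - 1) R ^ (p - 2)` on `[-R, R]`, so a second-order mean value argument gives
`|x + y| ^ p ≤ |x| ^ p + p |x| ^ (p - 2) x y + K (|x| ^ (p - 2) y ² + |y| ^ p)` with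
`K = p (p - 1) 2 ^ (p - 2)`.
Taking expectations with `X` a partial sum and `Y` an independent centred summand kills the
linear term and factors the middle one, and Jensen gives
`E |X| ^ (p - 2) ≤ (E |X| ^ p) ^ (1 - 2 / p)`. So `a_s = E |∑_{i ∈ s} U_i| ^ p` obeys
`a_{s ∪ {i}} ≤ a_s + K (a_s ^ (1 - 2 / p) E U_i ² + E |U_i| ^ p)`, and
`B = (2 K ∑ E U_i ²) ^ (p / 2) + 2 K ∑ E |U_i| ^ p` is a supersolution of this recursion,
hence bounds `a_s` for all `s` by induction.
-/

open MeasureTheory ProbabilityTheory Set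

theorem hasDerivAt_mul_id_zero_of_continuousAt {g : ℝ → ℝ} (hg : ContinuousAt g 0) :
    HasDerivAt (fun u => g u * u) (g 0) 0 := by
  rw [hasDerivAt_iff_tendsto_slope]
  refine (hg.tendsto.mono_left nhdsWithin_le_nhds).congr' ?_
  filter_upwards [self_mem_nhdsWithin] with u hu
  simp [slope, inv_mul_cancel_left₀ (show u ≠ 0 from hu), mul_comm]

theorem hasDerivAt_const_mul_abs_rpow_sub_two_mul {p : ℝ} (hp : 2 ≤ p) (u : ℝ) :
    HasDerivAt (fun v => p * |v| ^ (p - 2) * v) (p * (p - 1) * |u| ^ (p - 2)) u := by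
  rcases eq_or_ne u 0 with rfl | hu
  · have hc : ContinuousAt (fun v : ℝ => p * |v| ^ (p - 2)) 0 :=
      ((Real.continuousAt_rpow_const _ _ (Or.inr (by linarith))).comp
        continuous_abs.continuousAt).const_mul p
    convert hasDerivAt_mul_id_zero_of_continuousAt hc using 1
    -- `|0| ^ (p - 2)` is `1` when `p = 2` and `0` when `p > 2`
    rcases hp.eq_or_lt with rfl | hp
    · norm_num
    · simp [Real.zero_rpow (by linarith : p - 2 ≠ 0)]
  · have habs : |u| ≠ 0 := abs_ne_zero.mpr hu
    have h := (((hasDerivAt_abs hu).rpow_const (p := p - 2) (Or.inl habs)).mul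
      (hasDerivAt_id' u)).const_mul p
    refine (h.congr_deriv ?_).congr_of_eventuallyEq (.of_forall fun v => ?_)
    · calc _ = p * ((p - 2) * |u| ^ (p - 2) / |u| * (SignType.sign u * u) + |u| ^ (p - 2)) := by
            rw [Real.rpow_sub_one habs]; ring
        _ = p * (p - 1) * |u| ^ (p - 2) := by
            rw [sign_mul_self, div_mul_cancel₀ _ habs]; ring
    · simp only [Pi.mul_apply]
      ring

theorem abs_const_mul_abs_rpow_sub_two_mul_sub_le {p R : ℝ} (hp : 2 ≤ p) {u v : ℝ}
    (hu : |u| ≤ R) (hv : |v| ≤ R) :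
    |p * |u| ^ (p - 2) * u - p * |v| ^ (p - 2) * v| ≤ p * (p - 1) * R ^ (p - 2) * |u - v| := by
  refine (convex_Icc (-R) R).norm_image_sub_le_of_norm_hasDerivWithin_le
    (fun w _ => (hasDerivAt_const_mul_abs_rpow_sub_two_mul hp w).hasDerivWithinAt)
    (fun w hw => ?_) (abs_le.mp hv) (abs_le.mp hu)
  have hp1 : 0 ≤ p * (p - 1) := by nlinarith
  rw [Real.norm_eq_abs, abs_of_nonneg (by positivity)]
  gcongr
  exact abs_le.mpr hw

theorem abs_add_rpow_le_taylor {p : ℝ} (hp : 2 ≤ p) (x y : ℝ) :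
    |x + y| ^ p ≤ |x| ^ p + p * |x| ^ (p - 2) * x * y
      + p * (p - 1) * (|x| + |y|) ^ (p - 2) * y ^ 2 := by
  set φ : ℝ → ℝ := fun v => p * |v| ^ (p - 2) * v
  set L := p * (p - 1) * (|x| + |y|) ^ (p - 2)
  have hderiv : ∀ t ∈ Icc (0 : ℝ) 1, HasDerivWithinAt (fun t => |x + t * y| ^ p - t * (φ x * y))
      ((φ (x + t * y) - φ x) * y) (Icc 0 1) t := by
    intro t _
    have hline : HasDerivAt (fun t => x + t * y) y t := by
      simpa using ((hasDerivAt_id t).mul_const y).const_add x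
    have := ((hasDerivAt_abs_rpow (x + t * y) (by linarith)).comp t hline).sub
      ((hasDerivAt_id t).mul_const (φ x * y))
    exact (this.congr_deriv (by simp [φ, sub_mul])).hasDerivWithinAt
  have hbound : ∀ t ∈ Icc (0 : ℝ) 1, ‖(φ (x + t * y) - φ x) * y‖ ≤ L * y ^ 2 := by
    intro t ⟨ht0, ht1⟩
    have hty : |t * y| ≤ |y| := by
      rw [abs_mul, abs_of_nonneg ht0]; exact mul_le_of_le_one_left (abs_nonneg y) ht1
    have hseg : |x + t * y| ≤ |x| + |y| := (abs_add_le _ _).trans (by linarith)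
    calc ‖(φ (x + t * y) - φ x) * y‖ = |φ (x + t * y) - φ x| * |y| := by
          rw [Real.norm_eq_abs, abs_mul]
      _ ≤ L * |t * y| * |y| := by
          gcongr
          have := abs_const_mul_abs_rpow_sub_two_mul_sub_le hp hseg (by linarith [abs_nonneg y])
          rwa [add_sub_cancel_left] at this
      _ ≤ L * |y| * |y| := by
          have : 0 ≤ p * (p - 1) := by nlinarith
          gcongr
      _ = L * y ^ 2 := by rw [mul_assoc, abs_mul_abs_self, sq]
  have hmvt := (convex_Icc (0 : ℝ) 1).norm_image_sub_le_of_norm_hasDerivWithin_le hderiv hbound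
    (left_mem_Icc.mpr zero_le_one) (right_mem_Icc.mpr zero_le_one)
  simp only [Real.norm_eq_abs, φ, one_mul, zero_mul, add_zero, sub_zero, abs_one, mul_one] at hmvt
  linarith [le_abs_self (|x + y| ^ p - p * |x| ^ (p - 2) * x * y - |x| ^ p)]

theorem Real.add_rpow_le_two_rpow_mul_rpow_add_rpow {a b r : ℝ} (ha : 0 ≤ a) (hb : 0 ≤ b)
    (hr : 0 ≤ r) : (a + b) ^ r ≤ 2 ^ r * (a ^ r + b ^ r) := calc
  (a + b) ^ r ≤ (2 * max a b) ^ r := by gcongr; rw [two_mul]; gcongr <;> simp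
  _ = 2 ^ r * max (a ^ r) (b ^ r) := by
    rw [Real.mul_rpow zero_le_two (le_max_of_le_left ha), Real.rpow_max ha hb hr]
  _ ≤ 2 ^ r * (a ^ r + b ^ r) := by
    gcongr; exact max_le_add_of_nonneg (by positivity) (by positivity)

theorem abs_add_rpow_le {p : ℝ} (hp : 2 ≤ p) (x y : ℝ) :
    |x + y| ^ p ≤ |x| ^ p + p * (|x| ^ (p - 2) * x * y)
      + p * (p - 1) * 2 ^ (p - 2) * (|x| ^ (p - 2) * y ^ 2 + |y| ^ p) := by
  have hsplit :
      (|x| + |y|) ^ (p - 2) * y ^ 2 ≤ 2 ^ (p - 2) * (|x| ^ (p - 2) * y ^ 2 + |y| ^ p) := by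
    have hy : |y| ^ (p - 2) * y ^ 2 = |y| ^ p := by
      rw [← sq_abs, ← Real.rpow_natCast, ← Real.rpow_add' (abs_nonneg y) (by norm_num; linarith)]
      norm_num
    calc (|x| + |y|) ^ (p - 2) * y ^ 2 ≤ 2 ^ (p - 2) * (|x| ^ (p - 2) + |y| ^ (p - 2)) * y ^ 2 := by
          gcongr
          exact Real.add_rpow_le_two_rpow_mul_rpow_add_rpow (abs_nonneg x) (abs_nonneg y)
            (by linarith)
      _ = 2 ^ (p - 2) * (|x| ^ (p - 2) * y ^ 2 + |y| ^ p) := by rw [← hy]; ring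
  have hpp : 0 ≤ p * (p - 1) := by nlinarith
  have := mul_le_mul_of_nonneg_left hsplit hpp
  linarith [abs_add_rpow_le_taylor hp x y]

section Moments

variable {Ω : Type*} [MeasurableSpace Ω] {μ : Measure Ω} {p : ℝ} {X Y : Ω → ℝ}

theorem MeasureTheory.MemLp.integrable_abs_rpow [IsFiniteMeasure μ]
    (hX : MemLp X (ENNReal.ofReal p) μ) {q : ℝ} (hq : 0 ≤ q) (hqp : q ≤ p) :
    Integrable (fun ω => |X ω| ^ q) μ := by
  simpa [ENNReal.toReal_ofReal hq] using
    (hX.mono_exponent (ENNReal.ofReal_le_ofReal hqp)).integrable_norm_rpow'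

theorem integral_abs_rpow_le_rpow_integral [IsProbabilityMeasure μ]
    (hX : MemLp X (ENNReal.ofReal p) μ) {q : ℝ} (hq : 0 ≤ q) (hqp : q ≤ p) :
    ∫ ω, |X ω| ^ q ∂μ ≤ (∫ ω, |X ω| ^ p ∂μ) ^ (q / p) := by
  have hpq : p * (q / p) = q := by
    rcases eq_or_lt_of_le (hq.trans hqp) with hp | hp
    · simp [← hp, le_antisymm hqp (hp ▸ hq)]
    · field_simp
  have hcomp : ∀ ω, (|X ω| ^ p) ^ (q / p) = |X ω| ^ q := fun ω => by
    rw [← Real.rpow_mul (abs_nonneg _), hpq]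
  have hjensen := (Real.concaveOn_rpow (div_nonneg hq (hq.trans hqp))
    (div_le_one_of_le₀ hqp (hq.trans hqp))).le_map_integral
    ((Real.continuous_rpow_const (div_nonneg hq (hq.trans hqp))).continuousOn) isClosed_Ici
    (.of_forall fun ω => Set.mem_Ici.mpr (by positivity))
    (hX.integrable_abs_rpow (hq.trans hqp) le_rfl)
    (by simpa [Function.comp_def, hcomp] using hX.integrable_abs_rpow hq hqp)
  simpa [hcomp] using hjensen

theorem integral_abs_add_rpow_le [IsProbabilityMeasure μ] (hp : 2 ≤ p)
    (hX : MemLp X (ENNReal.ofReal p) μ) (hY : MemLp Y (ENNReal.ofReal p) μ) (hXY : IndepFun X Y μ)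
    (hY0 : ∫ ω, Y ω ∂μ = 0) :
    ∫ ω, |X ω + Y ω| ^ p ∂μ ≤ ∫ ω, |X ω| ^ p ∂μ + p * (p - 1) * 2 ^ (p - 2) *
      ((∫ ω, |X ω| ^ p ∂μ) ^ (1 - 2 / p) * ∫ ω, Y ω ^ 2 ∂μ + ∫ ω, |Y ω| ^ p ∂μ) := by
  set K := p * (p - 1) * 2 ^ (p - 2)
  have hpp : 0 ≤ p * (p - 1) := by nlinarith
  have hK : 0 ≤ K := by positivity
  have hg : Measurable fun u : ℝ => |u| ^ (p - 2) := by fun_prop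
  have hXp := hX.integrable_abs_rpow (by linarith) le_rfl
  have hYp := hY.integrable_abs_rpow (by linarith) le_rfl
  have hX2 := hX.integrable_abs_rpow (by linarith) (by linarith : p - 2 ≤ p)
  have hY2 : Integrable (fun ω => Y ω ^ 2) μ :=
    (hY.mono_exponent (by simpa using ENNReal.ofReal_le_ofReal hp)).integrable_sq
  have hW : Integrable (fun ω => |X ω| ^ (p - 2) * X ω) μ := by
    refine (hX.integrable_abs_rpow (q := p - 1) (by linarith) (by linarith)).mono'
      ((hg.mul measurable_id).comp_aemeasurable hX.aemeasurable).aestronglyMeasurable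
      (.of_forall fun ω => le_of_eq ?_)
    rw [Real.norm_eq_abs, abs_mul, abs_of_nonneg (by positivity),
      show p - 1 = p - 2 + 1 by ring, Real.rpow_add' (abs_nonneg _) (by linarith), Real.rpow_one]
  have hWY : IndepFun (fun ω => |X ω| ^ (p - 2) * X ω) Y μ :=
    hXY.comp (hg.mul measurable_id) measurable_id
  have hVY : IndepFun (fun ω => |X ω| ^ (p - 2)) (fun ω => Y ω ^ 2) μ :=
    hXY.comp hg (measurable_id.pow_const 2)
  have hmean : ∫ ω, |X ω| ^ (p - 2) * X ω * Y ω ∂μ = 0 := by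
    rw [hWY.integral_fun_mul_eq_mul_integral hW.aestronglyMeasurable hY.aestronglyMeasurable]
    simp [hY0]
  have hvar : ∫ ω, |X ω| ^ (p - 2) * Y ω ^ 2 ∂μ = (∫ ω, |X ω| ^ (p - 2) ∂μ) * ∫ ω, Y ω ^ 2 ∂μ :=
    hVY.integral_fun_mul_eq_mul_integral hX2.aestronglyMeasurable hY2.aestronglyMeasurable
  have hWYi : Integrable (fun ω => |X ω| ^ (p - 2) * X ω * Y ω) μ :=
    hWY.integrable_mul hW (hY.integrable (ENNReal.one_le_ofReal.mpr (by linarith)))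
  have hVYi : Integrable (fun ω => |X ω| ^ (p - 2) * Y ω ^ 2) μ := hVY.integrable_mul hX2 hY2
  have hfirst : Integrable (fun ω => |X ω| ^ p + p * (|X ω| ^ (p - 2) * X ω * Y ω)) μ :=
    hXp.add (hWYi.const_mul p)
  have hsecond : Integrable (fun ω => |X ω| ^ (p - 2) * Y ω ^ 2 + |Y ω| ^ p) μ := hVYi.add hYp
  calc ∫ ω, |X ω + Y ω| ^ p ∂μ
      ≤ ∫ ω, (|X ω| ^ p + p * (|X ω| ^ (p - 2) * X ω * Y ω)
          + K * (|X ω| ^ (p - 2) * Y ω ^ 2 + |Y ω| ^ p)) ∂μ := by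
        refine integral_mono_of_nonneg (.of_forall fun ω => by positivity) ?_
          (.of_forall fun ω => abs_add_rpow_le hp (X ω) (Y ω))
        exact hfirst.add (hsecond.const_mul K)
    _ = ∫ ω, |X ω| ^ p ∂μ + K * ((∫ ω, |X ω| ^ (p - 2) ∂μ) * ∫ ω, Y ω ^ 2 ∂μ
          + ∫ ω, |Y ω| ^ p ∂μ) := by
        rw [integral_add hfirst (hsecond.const_mul K),
          integral_add hXp (hWYi.const_mul p), integral_const_mul, integral_const_mul,
          integral_add hVYi hYp, hmean, hvar, mul_zero, add_zero]
    _ ≤ _ := by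
        gcongr
        rw [show 1 - 2 / p = (p - 2) / p by field_simp]
        exact integral_abs_rpow_le_rpow_integral hX (by linarith) (by linarith)

theorem integral_abs_sum_insert_rpow_le [IsProbabilityMeasure μ] (hp : 2 ≤ p) {ι : Type*}
    [DecidableEq ι] {U : ι → Ω → ℝ} (hU : iIndepFun U μ)
    (hLp : ∀ i, MemLp (U i) (ENNReal.ofReal p) μ) {s : Finset ι} {i : ι} (hi : i ∉ s)
    (hUi : ∫ ω, U i ω ∂μ = 0) :
    ∫ ω, |∑ j ∈ insert i s, U j ω| ^ p ∂μ ≤ ∫ ω, |∑ j ∈ s, U j ω| ^ p ∂μ +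
      p * (p - 1) * 2 ^ (p - 2) * ((∫ ω, |∑ j ∈ s, U j ω| ^ p ∂μ) ^ (1 - 2 / p) *
        ∫ ω, U i ω ^ 2 ∂μ + ∫ ω, |U i ω| ^ p ∂μ) := by
  have hXY : IndepFun (fun ω => ∑ j ∈ s, U j ω) (U i) μ := by
    simpa only [Finset.sum_fn] using
      hU.indepFun_finsetSum_of_notMem₀ (fun j => (hLp j).aemeasurable) hi
  have hX : MemLp (fun ω => ∑ j ∈ s, U j ω) (ENNReal.ofReal p) μ := by
    simpa only [Finset.sum_fn] using memLp_finsetSum' s fun j _ => hLp j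
  simpa only [Finset.sum_insert hi, add_comm (U i _)] using
    integral_abs_add_rpow_le hp hX (hLp i) hXY hUi

end Moments

theorem mul_rpow_one_sub_inv_mul_add_le {K r b c : ℝ} (hK : 0 ≤ K) (hr : 1 ≤ r) (hb : 0 ≤ b)
    (hc : 0 ≤ c) :
    K * (((2 * K * b) ^ r + 2 * K * c) ^ (1 - r⁻¹) * b + c) ≤ (2 * K * b) ^ r + 2 * K * c := by
  set B := (2 * K * b) ^ r + 2 * K * c
  have hBm : K * c ≤ B / 2 := by
    have : 0 ≤ (2 * K * b) ^ r := by positivity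
    linarith
  suffices K * (B ^ (1 - r⁻¹) * b) ≤ B / 2 by linarith
  rcases (mul_nonneg hK hb).eq_or_lt with hKb | hKb
  · have : 0 ≤ B := by positivity
    calc K * (B ^ (1 - r⁻¹) * b) = B ^ (1 - r⁻¹) * (K * b) := by ring
      _ ≤ B / 2 := by rw [← hKb, mul_zero]; linarith
  · have hB0 : 0 < B :=
      add_pos_of_pos_of_nonneg (Real.rpow_pos_of_pos (by linarith) r) (by positivity)
    have hroot : 2 * K * b ≤ B ^ r⁻¹ := by
      calc 2 * K * b = ((2 * K * b) ^ r) ^ r⁻¹ := by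
            rw [← Real.rpow_mul (by positivity), mul_inv_cancel₀ (by linarith), Real.rpow_one]
        _ ≤ B ^ r⁻¹ := by gcongr; linarith [mul_nonneg (mul_nonneg zero_le_two hK) hc]
    calc K * (B ^ (1 - r⁻¹) * b) = (2 * K * b) * B ^ (1 - r⁻¹) / 2 := by ring
      _ ≤ B ^ r⁻¹ * B ^ (1 - r⁻¹) / 2 := by gcongr
      _ = B / 2 := by rw [← Real.rpow_add hB0, add_sub_cancel, Real.rpow_one]

theorem le_rpow_add_of_le_insert {ι : Type*} [DecidableEq ι] {F : Finset ι → ℝ} {v m : ι → ℝ}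
    {K r : ℝ} (hK : 0 ≤ K) (hr : 1 ≤ r) (hv : ∀ i, 0 ≤ v i) (hm : ∀ i, 0 ≤ m i)
    (hF : ∀ s, 0 ≤ F s) (hF0 : F ∅ = 0)
    (hins : ∀ s i, i ∉ s → F (insert i s) ≤ F s + K * (F s ^ (1 - r⁻¹) * v i + m i))
    (t : Finset ι) :
    F t ≤ (2 * K * ∑ i ∈ t, v i) ^ r + 2 * K * ∑ i ∈ t, m i := by
  set B := (2 * K * ∑ i ∈ t, v i) ^ r + 2 * K * ∑ i ∈ t, m i
  have hb : 0 ≤ ∑ i ∈ t, v i := Finset.sum_nonneg fun i _ => hv i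
  have hc : 0 ≤ ∑ i ∈ t, m i := Finset.sum_nonneg fun i _ => hm i
  have hB : K * (B ^ (1 - r⁻¹) * ∑ i ∈ t, v i + ∑ i ∈ t, m i) ≤ B :=
    mul_rpow_one_sub_inv_mul_add_le hK hr hb hc
  have hθ : 0 ≤ 1 - r⁻¹ := sub_nonneg.mpr (inv_le_one_of_one_le₀ hr)
  have key : ∀ s ⊆ t, F s ≤ K * (B ^ (1 - r⁻¹) * ∑ i ∈ s, v i + ∑ i ∈ s, m i) := by
    intro s hs
    induction s using Finset.induction_on with
    | empty => simp [hF0]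
    | insert i s hi ih =>
      have hs' : s ⊆ t := (Finset.subset_insert i s).trans hs
      have hsub : F s ≤ B := (ih hs').trans (le_trans (by
        gcongr
        · exact fun j _ _ => hv j
        · exact fun j _ _ => hm j) hB)
      have hpow : K * (F s ^ (1 - r⁻¹) * v i) ≤ K * (B ^ (1 - r⁻¹) * v i) := by
        gcongr
        · exact hv i
        · exact hF s
      rw [Finset.sum_insert hi, Finset.sum_insert hi]
      linarith [hins s i hi, ih hs']
  exact (key t le_rfl).trans hB

/-- Rosenthal's inequality: for any p ≥ 2 there is a constant C(p) such that for
independent centered real random variables U₁,…,Uₙ,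
E|∑ᵢ Uᵢ|^p ≤ C(p) (∑ᵢ E|Uᵢ|^p + (∑ᵢ E Uᵢ²)^{p/2}). -/
theorem rosenthal_inequality (p : ℝ) (hp : 2 ≤ p) :
    ∃ C : ℝ, 0 < C ∧
      ∀ (Ω : Type) (_ : MeasurableSpace Ω) (μ : Measure Ω) (_ : IsProbabilityMeasure μ)
        (n : ℕ) (U : Fin n → Ω → ℝ),
        iIndepFun U μ →
        (∀ i, MemLp (U i) (ENNReal.ofReal p) μ) →
        (∀ i, ∫ ω, U i ω ∂μ = 0) →
        ∫ ω, |∑ i, U i ω| ^ p ∂μ ≤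
          C * ((∑ i, ∫ ω, |U i ω| ^ p ∂μ) + (∑ i, ∫ ω, (U i ω) ^ 2 ∂μ) ^ (p / 2)) := by
  set K := p * (p - 1) * 2 ^ (p - 2)
  have hK : 0 < K := by
    have : 0 < p * (p - 1) := by nlinarith
    positivity
  refine ⟨(2 * K) ^ (p / 2) + 2 * K, by positivity, ?_⟩
  intro Ω _ μ _ n U hU hLp hmean
  classical
  have hb : 0 ≤ ∑ i, ∫ ω, U i ω ^ 2 ∂μ := by positivity
  calc ∫ ω, |∑ i, U i ω| ^ p ∂μ
      ≤ (2 * K * ∑ i, ∫ ω, U i ω ^ 2 ∂μ) ^ (p / 2) + 2 * K * ∑ i, ∫ ω, |U i ω| ^ p ∂μ :=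
        le_rpow_add_of_le_insert (F := fun s => ∫ ω, |∑ i ∈ s, U i ω| ^ p ∂μ) (r := p / 2)
          hK.le (by linarith) (fun i => by positivity)
          (fun i => by positivity) (fun s => by positivity)
          (by simp [Real.zero_rpow (by linarith : p ≠ 0)])
          (fun s i hi => by simpa only [inv_div] using
            integral_abs_sum_insert_rpow_le hp hU hLp hi (hmean i)) Finset.univ
    _ = (2 * K) ^ (p / 2) * (∑ i, ∫ ω, U i ω ^ 2 ∂μ) ^ (p / 2)
          + 2 * K * ∑ i, ∫ ω, |U i ω| ^ p ∂μ := by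
        rw [Real.mul_rpow (by positivity) hb]
    _ ≤ _ := by
        have : 0 ≤ (2 * K) ^ (p / 2) * ∑ i, ∫ ω, |U i ω| ^ p ∂μ := by positivity
        have : 0 ≤ 2 * K * (∑ i, ∫ ω, U i ω ^ 2 ∂μ) ^ (p / 2) := by positivity
        linarith
end

section
/- For any vectors w, u, v, s in an inner product space with norm ‖·‖, if Pu denotes the orthogonal projection of s onto a subspace containing v, then 2⟨w, v − s⟩ − ‖s − v‖² ≤ ‖Qw‖² + ⟨w, (Ps − s)/‖Ps − s‖⟩², where Q is the orthogonal projection onto the subspace; in particular, 2⟨w, v − s⟩ − ‖s − v‖² ≤ ‖Qw‖² + ‖w − Qw‖²·0 + (⟨w, e⟩)² for the unit vector e = (Ps − s)/‖Ps − s‖ (assuming Ps ≠ s). -/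
/-!
Write `v - s = (v - Qs) + (Qs - s)` with `v - Qs ∈ S` and `Qs - s ⊥ S`. Then `⟪w, v - Qs⟫ = ⟪Qw, v - Qs⟫`
and `‖s - v‖² = ‖v - Qs‖² + ‖Qs - s‖²`, so with `a = v - Qs` and `d = Qs - s` the left side
splits into `2⟪Qw, a⟫ - ‖a‖²` and `2⟪w, d⟫ - ‖d‖²`; completing the square bounds these by `‖Qw‖²` and `⟪w, d / ‖d‖⟫²`.
-/

open RealInnerProductSpace

section

variable {E : Type*} [NormedAddCommGroup E] [InnerProductSpace ℝ E]

theorem two_mul_inner_sub_norm_sq_le (x y : E) : 2 * ⟪x, y⟫ - ‖y‖ ^ 2 ≤ ‖x‖ ^ 2 := by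
  linarith [norm_sub_sq_real x y, sq_nonneg ‖x - y‖]

theorem two_mul_inner_sub_norm_sq_le_inner_normalize_sq (w d : E) :
    2 * ⟪w, d⟫ - ‖d‖ ^ 2 ≤ ⟪w, ‖d‖⁻¹ • d⟫ ^ 2 := by
  rcases eq_or_ne d 0 with rfl | hd
  · simp
  have hinner : ⟪w, d⟫ = ⟪w, ‖d‖⁻¹ • d⟫ * ‖d‖ := by
    rw [real_inner_smul_right]
    field_simp
  rw [hinner]
  linarith [two_mul_le_add_sq ⟪w, ‖d‖⁻¹ • d⟫ ‖d‖]

namespace Submodule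

variable (K : Submodule ℝ E) [K.HasOrthogonalProjection]

theorem inner_sub_eq_inner_starProjection_add (w s : E) {v : E} (hv : v ∈ K) :
    ⟪w, v - s⟫ = ⟪K.starProjection w, v - K.starProjection s⟫ + ⟪w, K.starProjection s - s⟫ := by
  have hmem : v - K.starProjection s ∈ K := K.sub_mem hv (K.starProjection_apply_mem s)
  rw [K.inner_starProjection_left_eq_right, K.starProjection_eq_self_iff.mpr hmem,
    ← inner_add_right, sub_add_sub_cancel]

theorem norm_sub_sq_eq_norm_sub_starProjection_sq_add (s : E) {v : E} (hv : v ∈ K) :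
    ‖s - v‖ ^ 2 = ‖v - K.starProjection s‖ ^ 2 + ‖K.starProjection s - s‖ ^ 2 := by
  have hmem : K.starProjection s - v ∈ K := K.sub_mem (K.starProjection_apply_mem s) hv
  have horth : ⟪s - K.starProjection s, K.starProjection s - v⟫ = 0 :=
    K.starProjection_inner_eq_zero s _ hmem
  rw [← sub_add_sub_cancel s (K.starProjection s) v,
    norm_add_sq_real, horth, norm_sub_rev s, norm_sub_rev _ v]
  ring

end Submodule

end

theorem proj_chaining_bound_general
    {E : Type} [NormedAddCommGroup E] [InnerProductSpace ℝ E] [FiniteDimensional ℝ E]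
    (S : Submodule ℝ E) (v s w : E) (hv : v ∈ S) :
    2 * ⟪w, v - s⟫ - ‖s - v‖ ^ 2 ≤
      ‖(S.orthogonalProjectionOnto w : E)‖ ^ 2 +
        ⟪w, ‖(S.orthogonalProjectionOnto s : E) - s‖⁻¹ • ((S.orthogonalProjectionOnto s : E) - s)⟫ ^ 2 := by
  simp only [Submodule.coe_orthogonalProjectionOnto_apply]
  rw [S.inner_sub_eq_inner_starProjection_add w s hv,
    S.norm_sub_sq_eq_norm_sub_starProjection_sq_add s hv]
  linarith [two_mul_inner_sub_norm_sq_le (S.starProjection w) (v - S.starProjection s),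
    two_mul_inner_sub_norm_sq_le_inner_normalize_sq w (S.starProjection s - s)]

/-- For v in a subspace S with orthogonal projection Q, and vectors s, w with Qs ≠ s:
2⟨w, v − s⟩ − ‖s − v‖² ≤ ‖Qw‖² + ⟨w, (Qs − s)/‖Qs − s‖⟩². -/
theorem proj_chaining_bound
    {E : Type} [NormedAddCommGroup E] [InnerProductSpace ℝ E] [FiniteDimensional ℝ E]
    (S : Submodule ℝ E) (v s w : E) (hv : v ∈ S)
    (hs : ((S.orthogonalProjectionOnto s : E)) ≠ s) :
    2 * ⟪w, v - s⟫ - ‖s - v‖ ^ 2 ≤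
      ‖(S.orthogonalProjectionOnto w : E)‖ ^ 2 +
        ⟪w, ‖(S.orthogonalProjectionOnto s : E) - s‖⁻¹ • ((S.orthogonalProjectionOnto s : E) - s)⟫ ^ 2 :=
  proj_chaining_bound_general S v s w hv
end

section
/- Let φ₁,…,φ_m be an orthonormal basis (in L₂ of Lebesgue measure on [0,1]) for the space of piecewise polynomials of degree at most r−1 on a regular partition of [0,1] into K intervals (so m = rK). Then sup_{t∈[0,1]} ∑_{j=1}^m φ_j(t)² ≤ (2r−1)² K. -/
/-!
Fix `t` and put `v = ∑ⱼ φⱼ(t) φⱼ`. Orthonormality gives `∫₀¹ v² = ∑ⱼ φⱼ(t)² = v(t)`. On the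
cell of length `1/K` containing `t`, `v` is a polynomial of degree `< r`, and such a polynomial
satisfies `p(t)² · |I| ≤ r² ∫_I p²` on every interval `I ∋ t`. Hence `v(t)² ≤ r² K v(t)`, i.e.
`∑ⱼ φⱼ(t)² ≤ r² K ≤ (2r - 1)² K`.

Splitting `I` at `t` and rescaling reduces the polynomial inequality to the endpoint bound
`p(0)² ≤ n² ∫₀¹ p²` for `deg p < n`. That is Cauchy–Schwarz against the polynomial `Q_n` of
degree `< n` that reproduces `p ↦ p(0)` in `L²[0,1]`: then `p(0)² ≤ ∫ p² · ∫ Q_n² = Q_n(0) ∫ p²`,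
and `Q_n(0) = n²`.
-/

open MeasureTheory

/-- Piecewise polynomials of degree at most r−1 on the regular partition of [0,1]
into K intervals (extended by zero outside [0,1)). -/
def PiecewisePoly (r K : ℕ) (v : ℝ → ℝ) : Prop :=
  (∀ j : Fin K, ∃ p : Polynomial ℝ, p.natDegree < r ∧
    ∀ t ∈ Set.Ico ((j : ℝ) / K) (((j : ℝ) + 1) / K), v t = Polynomial.eval t p) ∧
  ∀ t, t ∉ Set.Ico (0 : ℝ) 1 → v t = 0

open Polynomial Finset

theorem sum_range_neg_one_pow_mul_choose_mul_eval_eq_zero {R : Type*} [CommRing R] {n : ℕ}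
    {p : R[X]} (hp : p.natDegree < n) :
    ∑ k ∈ range (n + 1), (-1 : R) ^ k * n.choose k * p.eval (k : R) = 0 := by
  have h := congrArg ((-1 : R) ^ n * ·) (congrFun (fwdDiff_iter_eq_zero_of_degree_lt hp) 0)
  simp only [fwdDiff_iter_eq_sum_shift, Pi.zero_apply, mul_zero, mul_sum] at h
  rw [← h]
  refine sum_congr rfl fun k hk => ?_
  have hsign : (-1 : R) ^ n * (-1) ^ (n - k) = (-1) ^ k := by
    rw [← pow_add, show n + (n - k) = k + 2 * (n - k) by grind, pow_add, pow_mul]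
    simp
  simp only [zsmul_eq_mul, zero_add, nsmul_eq_mul, mul_one]
  push_cast
  rw [← hsign]
  ring

noncomputable def endpointKernelCoeff (n k : ℕ) : ℝ :=
  (-1) ^ k * n * (k + n).choose n * n.choose (k + 1)

/-- With `Q = ∏_{u<n, u≠j} (X + u)` one has `(j+k+1) Q(k+1) = n! (k+n choose n)`, so the sum is
`n/n! · ∑_{k<n} (-1)^k (n choose k+1) Q(k+1)`. As `deg Q < n`, its `n`-th finite difference
vanishes and this equals `n/n! · Q(0)`; finally `Q(0) = 0` unless `j = 0`. -/
theorem sum_endpointKernelCoeff_div {n j : ℕ} (hj : j < n) :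
    ∑ k ∈ range n, endpointKernelCoeff n k / (j + k + 1) = if j = 0 then 1 else 0 := by
  set Q : ℝ[X] := ∏ u ∈ (range n).erase j, (X + C (u : ℝ))
  have hQ_deg : Q.natDegree < n := by
    rw [natDegree_prod_of_monic _ _ fun u _ => monic_X_add_C _]
    simp only [natDegree_X_add_C, sum_const, smul_eq_mul, mul_one,
      card_erase_of_mem (mem_range.2 hj), card_range]
    omega
  have hQ_succ (k : ℕ) :
      ((j : ℝ) + k + 1) * Q.eval ((k : ℝ) + 1) = n.factorial * (k + n).choose n := by
    have h : (X + C (j : ℝ)) * Q = ∏ u ∈ range n, (X + C (u : ℝ)) :=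
      mul_prod_erase (range n) (fun u : ℕ => X + C (u : ℝ)) (mem_range.2 hj)
    replace h := congrArg (eval ((k : ℝ) + 1)) h
    simp only [eval_mul, eval_prod, eval_add, eval_X, eval_C] at h
    rw [← Nat.cast_mul, ← Nat.ascFactorial_eq_factorial_mul_choose,
      Nat.ascFactorial_eq_prod_range]
    push_cast
    linear_combination h
  have hterm (k : ℕ) : endpointKernelCoeff n k / (j + k + 1)
      = n / n.factorial * ((-1) ^ k * n.choose (k + 1) * Q.eval ((k : ℝ) + 1)) := by
    rw [endpointKernelCoeff, div_eq_iff (by positivity)]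
    calc _ = (n / n.factorial * ((-1) ^ k * n.choose (k + 1)) *
          (n.factorial * (k + n).choose n) : ℝ) := by field_simp
      _ = _ := by rw [← hQ_succ k]; ring
  have halt :
      ∑ k ∈ range n, (-1) ^ k * n.choose (k + 1) * Q.eval ((k : ℝ) + 1) = Q.eval 0 := by
    have h := sum_range_neg_one_pow_mul_choose_mul_eval_eq_zero hQ_deg
    simp only [sum_range_succ', pow_succ, Nat.choose_zero_right, Nat.cast_add, Nat.cast_one,
      Nat.cast_zero, mul_neg, mul_one, neg_mul, sum_neg_distrib, pow_zero] at h
    linear_combination -h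
  rw [sum_congr rfl fun k _ => hterm k, ← mul_sum, halt]
  simp only [Q, eval_prod, eval_add, eval_X, eval_C, zero_add]
  split_ifs with hj0
  · subst hj0
    obtain ⟨m, rfl⟩ : ∃ m, n = m + 1 := ⟨n - 1, by omega⟩
    rw [show (range (m + 1)).erase 0 = Ico 1 (m + 1) by ext; simp; omega, ← Nat.cast_prod,
      prod_Ico_id_eq_factorial, Nat.factorial_succ]
    push_cast
    field_simp
  · rw [prod_eq_zero (i := 0) (mem_erase.2 ⟨Ne.symm hj0, mem_range.2 (by omega)⟩) (by simp),
      mul_zero]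

/-- The reproducing kernel at `0` of the polynomials of degree `< n` in `L²[0,1]`, i.e.
`∑_{k<n} (2k+1) Pₖ(0) Pₖ` for the shifted Legendre polynomials `Pₖ`, written in the monomial
basis. -/
noncomputable def endpointKernel (n : ℕ) : ℝ[X] :=
  ∑ k ∈ range n, C (endpointKernelCoeff n k) * X ^ k

theorem natDegree_endpointKernel_lt {n : ℕ} (hn : 0 < n) : (endpointKernel n).natDegree < n := by
  refine lt_of_le_of_lt (natDegree_sum_le_of_forall_le _ _ fun k hk => ?_) (Nat.pred_lt hn.ne')
  exact (natDegree_C_mul_X_pow_le _ k).trans (Nat.le_pred_of_lt (mem_range.1 hk))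

theorem eval_endpointKernel (n : ℕ) (x : ℝ) :
    (endpointKernel n).eval x = ∑ k ∈ range n, endpointKernelCoeff n k * x ^ k := by
  simp [endpointKernel, eval_finsetSum]

theorem endpointKernel_eval_zero (n : ℕ) : (endpointKernel n).eval 0 = n ^ 2 := by
  rcases n.eq_zero_or_pos with rfl | hn
  · simp [endpointKernel]
  rw [eval_endpointKernel, sum_eq_single_of_mem 0 (mem_range.2 hn) fun k _ hk => by simp [hk]]
  simp [endpointKernelCoeff, sq]

theorem integral_pow_mul_endpointKernel {n j : ℕ} (hj : j < n) :
    ∫ x in (0 : ℝ)..1, x ^ j * (endpointKernel n).eval x = if j = 0 then 1 else 0 := by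
  simp_rw [eval_endpointKernel, mul_sum, ← sum_endpointKernelCoeff_div hj]
  rw [intervalIntegral.integral_finsetSum fun k _ =>
    (by fun_prop : Continuous _).intervalIntegrable _ _]
  refine sum_congr rfl fun k _ => ?_
  simp only [mul_left_comm _ (endpointKernelCoeff n k), ← pow_add,
    intervalIntegral.integral_const_mul, integral_pow]
  push_cast
  ring

theorem integral_mul_endpointKernel {n : ℕ} {p : ℝ[X]} (hp : p.natDegree < n) :
    ∫ x in (0 : ℝ)..1, p.eval x * (endpointKernel n).eval x = p.eval 0 := by
  rw [← coeff_zero_eq_eval_zero]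
  simp_rw [eval_eq_sum_range' hp, sum_mul, mul_assoc]
  rw [intervalIntegral.integral_finsetSum fun k _ =>
    (by fun_prop : Continuous _).intervalIntegrable _ _]
  simp_rw [intervalIntegral.integral_const_mul]
  rw [sum_congr rfl fun j hj => by rw [integral_pow_mul_endpointKernel (mem_range.1 hj)]]
  simp [mem_range.2 (pos_of_gt hp)]

theorem sq_eval_zero_le_integral {n : ℕ} {p : ℝ[X]} (hp : p.natDegree < n) :
    p.eval 0 ^ 2 ≤ n ^ 2 * ∫ x in (0 : ℝ)..1, p.eval x ^ 2 := by
  have hn : (0 : ℝ) < n := by exact_mod_cast pos_of_gt hp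
  set Q := endpointKernel n
  set c := p.eval 0 / n ^ 2
  have hQQ : ∫ x in (0 : ℝ)..1, Q.eval x * Q.eval x = n ^ 2 := by
    rw [integral_mul_endpointKernel (natDegree_endpointKernel_lt (by exact_mod_cast hn)),
      endpointKernel_eval_zero]
  have hexpand : ∫ x in (0 : ℝ)..1, (p.eval x - c * Q.eval x) ^ 2
      = (∫ x in (0 : ℝ)..1, p.eval x ^ 2) - 2 * c * p.eval 0 + c ^ 2 * n ^ 2 := by
    have hpt (x : ℝ) : (p.eval x - c * Q.eval x) ^ 2
        = p.eval x ^ 2 - 2 * c * (p.eval x * Q.eval x) + c ^ 2 * (Q.eval x * Q.eval x) := by ring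
    simp_rw [hpt]
    rw [intervalIntegral.integral_add, intervalIntegral.integral_sub,
      intervalIntegral.integral_const_mul, intervalIntegral.integral_const_mul, hQQ,
      integral_mul_endpointKernel hp]
    all_goals exact (by fun_prop : Continuous _).intervalIntegrable _ _
  have hnonneg : 0 ≤ ∫ x in (0 : ℝ)..1, (p.eval x - c * Q.eval x) ^ 2 :=
    intervalIntegral.integral_nonneg zero_le_one fun x _ => sq_nonneg _
  rw [hexpand] at hnonneg
  have hsq : p.eval 0 ^ 2 = n ^ 2 * (2 * c * p.eval 0 - c ^ 2 * n ^ 2) := by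
    simp only [c]; field_simp; ring
  rw [hsq]
  gcongr
  linarith

theorem sq_eval_left_mul_le_integral {n : ℕ} {p : ℝ[X]} (hp : p.natDegree < n) {a b : ℝ}
    (hab : a ≤ b) : p.eval a ^ 2 * (b - a) ≤ n ^ 2 * ∫ x in a..b, p.eval x ^ 2 := by
  set q := p.comp (C (b - a) * X + C a)
  have hq : q.natDegree < n :=
    calc q.natDegree ≤ p.natDegree * (C (b - a) * X + C a).natDegree := natDegree_comp_le
      _ ≤ p.natDegree * 1 := Nat.mul_le_mul_left _ natDegree_linear_le
      _ < n := by rwa [mul_one]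
  have hscale : (b - a) * ∫ x in (0 : ℝ)..1, q.eval x ^ 2 = ∫ x in a..b, p.eval x ^ 2 := by
    have h := intervalIntegral.smul_integral_comp_mul_add (a := 0) (b := 1)
      (fun x => p.eval x ^ 2) (b - a) a
    simp only [mul_zero, zero_add, mul_one, sub_add_cancel, smul_eq_mul] at h
    simpa [q, eval_comp] using h
  have h0 : q.eval 0 = p.eval a := by simp [q]
  calc p.eval a ^ 2 * (b - a) ≤ n ^ 2 * (∫ x in (0 : ℝ)..1, q.eval x ^ 2) * (b - a) := by
        rw [← h0]; gcongr; exact sq_eval_zero_le_integral hq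
    _ = n ^ 2 * ∫ x in a..b, p.eval x ^ 2 := by rw [← hscale]; ring

theorem sq_eval_right_mul_le_integral {n : ℕ} {p : ℝ[X]} (hp : p.natDegree < n) {a b : ℝ}
    (hab : a ≤ b) : p.eval b ^ 2 * (b - a) ≤ n ^ 2 * ∫ x in a..b, p.eval x ^ 2 := by
  have h := sq_eval_left_mul_le_integral (p := p.comp (-X))
    (by rwa [natDegree_comp, natDegree_neg, natDegree_X, mul_one]) (neg_le_neg hab)
  simpa [intervalIntegral.integral_comp_neg (fun x => p.eval x ^ 2), sub_eq_add_neg, add_comm]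
    using h

theorem sq_eval_mul_le_integral {n : ℕ} {p : ℝ[X]} (hp : p.degree < n) {a t b : ℝ}
    (hat : a ≤ t) (htb : t ≤ b) : p.eval t ^ 2 * (b - a) ≤ n ^ 2 * ∫ x in a..b, p.eval x ^ 2 := by
  rcases eq_or_ne p 0 with rfl | hp0
  · simp
  replace hp := (natDegree_lt_iff_degree_lt hp0).2 hp
  have hint (u v : ℝ) : IntervalIntegrable (fun x => p.eval x ^ 2) volume u v :=
    (by fun_prop : Continuous _).intervalIntegrable _ _
  rw [← intervalIntegral.integral_add_adjacent_intervals (hint a t) (hint t b)]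
  linarith [sq_eval_right_mul_le_integral hp hat, sq_eval_left_mul_le_integral hp htb]

open Set

def regularCell (K j : ℕ) : Set ℝ := Ico ((j : ℝ) / K) ((j + 1) / K)

theorem exists_mem_regularCell {K : ℕ} (hK : 0 < K) {t : ℝ} (ht : t ∈ Ico (0 : ℝ) 1) :
    ∃ j : Fin K, t ∈ regularCell K j := by
  have hK' : (0 : ℝ) < K := by exact_mod_cast hK
  have hfloor : ⌊t * K⌋₊ < K := (Nat.floor_lt (by nlinarith [ht.1])).2 (by nlinarith [ht.2])
  refine ⟨⟨_, hfloor⟩, ?_⟩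
  rw [regularCell, Set.mem_Ico, div_le_iff₀ hK', lt_div_iff₀ hK']
  exact ⟨Nat.floor_le (by nlinarith [ht.1]), Nat.lt_floor_add_one _⟩

theorem regularCell_subset_Ico {K j : ℕ} (hj : j < K) : regularCell K j ⊆ Ico 0 1 := by
  have hK' : (0 : ℝ) < K := by exact_mod_cast j.zero_le.trans_lt hj
  refine Ico_subset_Ico (by positivity) ?_
  rw [div_le_one hK']
  exact_mod_cast hj

/-- The space `S_K`. Degrees are bounded through `degreeLT` so that this is a submodule also
for `r = 0`. -/
def piecewisePolySubmodule (r K : ℕ) : Submodule ℝ (ℝ → ℝ) where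
  carrier := {v | (∀ j : Fin K, ∃ p ∈ degreeLT ℝ r, EqOn v p.eval (regularCell K j)) ∧
    EqOn v 0 (Ico 0 1)ᶜ}
  zero_mem' := ⟨fun _ => ⟨0, zero_mem _, fun _ _ => by simp⟩, fun _ _ => rfl⟩
  add_mem' := by
    rintro f g ⟨hf, hf0⟩ ⟨hg, hg0⟩
    refine ⟨fun j => ?_, fun t ht => by simp [hf0 ht, hg0 ht]⟩
    obtain ⟨p, hp, hfp⟩ := hf j
    obtain ⟨q, hq, hgq⟩ := hg j
    exact ⟨p + q, add_mem hp hq, fun t ht => by simp [hfp ht, hgq ht]⟩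
  smul_mem' := by
    rintro c f ⟨hf, hf0⟩
    refine ⟨fun j => ?_, fun t ht => by simp [hf0 ht]⟩
    obtain ⟨p, hp, hfp⟩ := hf j
    exact ⟨c • p, Submodule.smul_mem _ c hp, fun t ht => by simp [hfp ht]⟩

theorem PiecewisePoly.mem_piecewisePolySubmodule {r K : ℕ} {v : ℝ → ℝ}
    (hv : PiecewisePoly r K v) : v ∈ piecewisePolySubmodule r K := by
  refine ⟨fun j => ?_, hv.2⟩
  obtain ⟨p, hp, hvp⟩ := hv.1 j
  exact ⟨p, mem_degreeLT.2 ((degree_le_natDegree).trans_lt (by exact_mod_cast hp)), hvp⟩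

theorem integrable_mul_of_mem_piecewisePolySubmodule {r r' K : ℕ} (hK : 0 < K) {f g : ℝ → ℝ}
    (hf : f ∈ piecewisePolySubmodule r K) (hg : g ∈ piecewisePolySubmodule r' K) :
    Integrable (fun t => f t * g t) := by
  have hcover : univ ⊆ (⋃ j : Fin K, regularCell K j) ∪ (Ico 0 1)ᶜ := fun t _ => by
    by_cases ht : t ∈ Ico (0 : ℝ) 1
    · exact Or.inl (mem_iUnion.2 (exists_mem_regularCell hK ht))
    · exact Or.inr ht
  have hcell (j : Fin K) : IntegrableOn (fun t => f t * g t) (regularCell K j) := by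
    obtain ⟨p, -, hfp⟩ := hf.1 j
    obtain ⟨q, -, hgq⟩ := hg.1 j
    have hpq : IntegrableOn (fun t => p.eval t * q.eval t) (regularCell K j) :=
      (by fun_prop : Continuous _).integrableOn_Icc.mono_set Ico_subset_Icc_self
    exact hpq.congr_fun (fun t ht => by simp [hfp ht, hgq ht]) measurableSet_Ico
  have hout : IntegrableOn (fun t => f t * g t) (Ico 0 1)ᶜ :=
    integrableOn_zero.congr_fun (fun t ht => by simp [hf.2 ht]) measurableSet_Ico.compl
  exact integrableOn_univ.1 (((integrableOn_finite_iUnion.2 hcell).union hout).mono_set hcover)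

theorem sq_le_mul_integral_of_mem_piecewisePolySubmodule {r K : ℕ} (hK : 0 < K) {v : ℝ → ℝ}
    (hv : v ∈ piecewisePolySubmodule r K) (t : ℝ) :
    v t ^ 2 ≤ r ^ 2 * K * ∫ s in Icc (0 : ℝ) 1, v s ^ 2 := by
  have hint : IntegrableOn (fun s => v s ^ 2) (Icc 0 1) := by
    simpa only [sq] using (integrable_mul_of_mem_piecewisePolySubmodule hK hv hv).integrableOn
  by_cases ht : t ∈ Ico (0 : ℝ) 1
  swap
  · rw [hv.2 ht, Pi.zero_apply, zero_pow two_ne_zero]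
    exact mul_nonneg (by positivity) (setIntegral_nonneg measurableSet_Icc fun s _ => sq_nonneg _)
  obtain ⟨j, htj⟩ := exists_mem_regularCell hK ht
  obtain ⟨p, hp, hvp⟩ := hv.1 j
  have hK' : (0 : ℝ) < K := by exact_mod_cast hK
  have hcell :
      ∫ x in (j / K : ℝ)..((j + 1) / K), p.eval x ^ 2 = ∫ s in regularCell K j, v s ^ 2 := by
    rw [intervalIntegral.integral_of_le (by gcongr; linarith), ← integral_Ico_eq_integral_Ioc]
    exact setIntegral_congr_fun measurableSet_Ico fun s hs => by simp [hvp hs]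
  have hmono : ∫ s in regularCell K j, v s ^ 2 ≤ ∫ s in Icc (0 : ℝ) 1, v s ^ 2 :=
    setIntegral_mono_set hint (.of_forall fun s => sq_nonneg (v s))
      ((regularCell_subset_Ico j.2).trans Ico_subset_Icc_self).eventuallyLE
  have hvt : v t = p.eval t := hvp htj
  have key := sq_eval_mul_le_integral (mem_degreeLT.1 hp) htj.1 htj.2.le
  rw [hcell, ← hvt, show ((j : ℝ) + 1) / K - j / K = (K : ℝ)⁻¹ by field_simp; ring] at key
  calc v t ^ 2 = v t ^ 2 * (K : ℝ)⁻¹ * K := by field_simp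
    _ ≤ r ^ 2 * (∫ s in regularCell K j, v s ^ 2) * K := by gcongr
    _ ≤ r ^ 2 * K * ∫ s in Icc (0 : ℝ) 1, v s ^ 2 := by
      rw [mul_right_comm]; gcongr

theorem integral_sq_sum_mul_of_orthonormal {ι α : Type*} [Fintype ι] [DecidableEq ι]
    [MeasurableSpace α] {μ : Measure α} {φ : ι → α → ℝ}
    (hint : ∀ i j, Integrable (fun s => φ i s * φ j s) μ)
    (hortho : ∀ i j, ∫ s, φ i s * φ j s ∂μ = if i = j then 1 else 0) (c : ι → ℝ) :
    ∫ s, (∑ i, c i * φ i s) ^ 2 ∂μ = ∑ i, c i ^ 2 := by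
  have hexpand (s : α) : (∑ i, c i * φ i s) ^ 2 = ∑ i, ∑ j, c i * c j * (φ i s * φ j s) := by
    rw [sq, sum_mul_sum]
    exact sum_congr rfl fun i _ => sum_congr rfl fun j _ => by ring
  simp_rw [hexpand]
  rw [integral_finsetSum _ fun i _ => integrable_finsetSum _ fun j _ => (hint i j).const_mul _]
  simp_rw [integral_finsetSum _ fun j _ => (hint _ j).const_mul _, integral_const_mul, hortho]
  simp [sq]

theorem sum_sq_le_of_orthonormal {r K m : ℕ} (hK : 0 < K) {φ : Fin m → ℝ → ℝ}
    (hpp : ∀ j, PiecewisePoly r K (φ j))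
    (hortho : ∀ i j : Fin m,
      (∫ t in Icc (0 : ℝ) 1, φ i t * φ j t) = if i = j then 1 else 0) (t : ℝ) :
    ∑ j, φ j t ^ 2 ≤ r ^ 2 * K := by
  have hmem (j : Fin m) := (hpp j).mem_piecewisePolySubmodule
  set v : ℝ → ℝ := ∑ j, φ j t • φ j
  have hv_apply (s : ℝ) : v s = ∑ j, φ j t * φ j s := by simp [v]
  have hv : v ∈ piecewisePolySubmodule r K :=
    Submodule.sum_mem _ fun j _ => Submodule.smul_mem _ _ (hmem j)
  have hnorm : ∫ s in Icc (0 : ℝ) 1, v s ^ 2 = ∑ j, φ j t ^ 2 := by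
    simp_rw [hv_apply]
    exact integral_sq_sum_mul_of_orthonormal
      (fun i j => (integrable_mul_of_mem_piecewisePolySubmodule hK (hmem i) (hmem j)).integrableOn)
      hortho _
  have hbound := sq_le_mul_integral_of_mem_piecewisePolySubmodule hK hv t
  rw [hnorm, hv_apply] at hbound
  simp_rw [← sq] at hbound
  rcases (sum_nonneg fun j _ => sq_nonneg (φ j t)).eq_or_lt with hzero | hpos
  · rw [← hzero]; positivity
  · exact le_of_mul_le_mul_right (by rwa [← sq]) hpos

theorem orthonormal_basis_sup_bound_general (r K m : ℕ) (hK : 0 < K)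
    (φ : Fin m → ℝ → ℝ)
    (hpp : ∀ j, PiecewisePoly r K (φ j))
    (hortho : ∀ i j : Fin m,
      (∫ t in Set.Icc (0 : ℝ) 1, φ i t * φ j t) = if i = j then 1 else 0) :
    ∀ t ∈ Set.Icc (0 : ℝ) 1, (∑ j, φ j t ^ 2) ≤ ((2 * r - 1 : ℝ)) ^ 2 * K := by
  intro t _
  calc ∑ j, φ j t ^ 2 ≤ r ^ 2 * K := sum_sq_le_of_orthonormal hK hpp hortho t
    _ ≤ (2 * r - 1) ^ 2 * K := by
      refine mul_le_mul_of_nonneg_right ?_ K.cast_nonneg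
      rcases r.eq_zero_or_pos with rfl | hr
      · norm_num
      · have : (1 : ℝ) ≤ r := by exact_mod_cast hr
        nlinarith

/-- Birgé–Massart bound: for an orthonormal basis φ₁,…,φ_m (m = rK) of the space of
piecewise polynomials of degree ≤ r−1 on the regular partition of [0,1] into K pieces,
sup_{t∈[0,1]} ∑ⱼ φⱼ(t)² ≤ (2r−1)² K. -/
theorem orthonormal_basis_sup_bound (r K m : ℕ) (hr : 0 < r) (hK : 0 < K)
    (hm : m = r * K) (φ : Fin m → ℝ → ℝ)
    (hpp : ∀ j, PiecewisePoly r K (φ j))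
    (hortho : ∀ i j : Fin m,
      (∫ t in Set.Icc (0 : ℝ) 1, φ i t * φ j t) = if i = j then 1 else 0) :
    ∀ t ∈ Set.Icc (0 : ℝ) 1, (∑ j, φ j t ^ 2) ≤ ((2 * r - 1 : ℝ)) ^ 2 * K :=
  orthonormal_basis_sup_bound_general r K m hK φ hpp hortho
end
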